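/- arXiv:2408.06510 — 6 statements merged into one kernel-verified Lean document; each statement's English description precedes it below -/
import Mathlib

section
/- Guivarc'h's lemma specialized to higher Heisenberg groups: for every norm N on ℝⁿ × ℝⁿ there exists λ₀ with 0 < λ₀ < 1 such that for every λ with 0 < λ ≤ λ₀, the layered sup quasi-norm ‖(x,y,z)‖ = max(N(x,y), λ√|z|) satisfies the triangle inequality with respect to the Heisenberg product, i.e. ‖p·q‖ ≤ ‖p‖ + ‖q‖ for all p, q ∈ H_{2n+1}(ℝ). -/
open Filter Metric Real

noncomputable section

/-- Type synonym to carry an alternative norm. -/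
def GuivSyn (E : Type*) : Type _ := E

lemma guiv_exists_bound {E : Type*} [NormedAddCommGroup E] [NormedSpace ℝ E]
    [FiniteDimensional ℝ E] (N : E → ℝ)
    (hadd : ∀ u v, N (u + v) ≤ N u + N v)
    (hsmul : ∀ (c : ℝ) u, N (c • u) = |c| * N u)
    (hzero : ∀ u, N u = 0 ↔ u = 0) :
    ∃ C : ℝ, 0 < C ∧ ∀ u, ‖u‖ ≤ C * N u := by
  have hN0 : N 0 = 0 := by
    have := hsmul 0 0
    simpa using this
  have hneg : ∀ u, N (-u) = N u := by
    intro u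
    have := hsmul (-1) u
    simpa using this
  letI : AddCommGroup (GuivSyn E) := inferInstanceAs (AddCommGroup E)
  letI : Module ℝ (GuivSyn E) := inferInstanceAs (Module ℝ E)
  letI : NormedAddCommGroup (GuivSyn E) :=
    AddGroupNorm.toNormedAddCommGroup
      { toFun := fun u => N u
        map_zero' := hN0
        add_le' := hadd
        neg' := hneg
        eq_zero_of_map_eq_zero' := fun u h => (hzero u).1 h }
  letI : NormedSpace ℝ (GuivSyn E) := ⟨fun c u => le_of_eq (hsmul c u)⟩
  letI : FiniteDimensional ℝ (GuivSyn E) := inferInstanceAs (FiniteDimensional ℝ E)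
  let idL : GuivSyn E →ₗ[ℝ] E :=
    { toFun := fun u => u
      map_add' := fun _ _ => rfl
      map_smul' := fun _ _ => rfl }
  let L := LinearMap.toContinuousLinearMap idL
  refine ⟨‖L‖ + 1, by positivity, fun u => ?_⟩
  have h1 : ‖u‖ ≤ ‖L‖ * N u := L.le_opNorm u
  have h2 : (0:ℝ) ≤ N u := by
    have h := hadd u (-u)
    rw [add_neg_cancel, hN0, hneg] at h
    linarith
  nlinarith [norm_nonneg L]


/-- The higher Heisenberg group `H_{2n+1}(ℝ)` as `ℝⁿ × ℝⁿ × ℝ`. -/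
abbrev Heis (n : ℕ) := (Fin n → ℝ) × (Fin n → ℝ) × ℝ

/-- Standard inner product on `ℝⁿ`. -/
def dotR {n : ℕ} (x y : Fin n → ℝ) : ℝ := ∑ i, x i * y i

/-- Heisenberg group product. -/
def Hmul {n : ℕ} (p q : Heis n) : Heis n :=
  (p.1 + q.1, p.2.1 + q.2.1,
    p.2.2 + q.2.2 + (1 / 2) * (dotR p.1 q.2.1 - dotR q.1 p.2.1))

/-- The layered sup quasi-norm `max(N(x,y), λ√|z|)`. -/
def layeredNorm {n : ℕ} (N : (Fin n → ℝ) × (Fin n → ℝ) → ℝ) (lam : ℝ) (p : Heis n) : ℝ :=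
  max (N (p.1, p.2.1)) (lam * Real.sqrt |p.2.2|)

/-- **Guivarc'h's lemma for higher Heisenberg groups.** For every norm `N` on `ℝⁿ × ℝⁿ`
there exists `λ₀` with `0 < λ₀ < 1` such that for every `0 < λ ≤ λ₀` the layered sup
quasi-norm satisfies the triangle inequality with respect to the Heisenberg product. -/
theorem guivarch_heisenberg (n : ℕ) (N : (Fin n → ℝ) × (Fin n → ℝ) → ℝ)
    (hN_add : ∀ u v, N (u + v) ≤ N u + N v)
    (hN_smul : ∀ (c : ℝ) u, N (c • u) = |c| * N u)
    (hN_zero : ∀ u, N u = 0 ↔ u = 0) :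
    ∃ lam₀ : ℝ, 0 < lam₀ ∧ lam₀ < 1 ∧
      ∀ lam : ℝ, 0 < lam → lam ≤ lam₀ →
        ∀ p q : Heis n,
          layeredNorm N lam (Hmul p q) ≤ layeredNorm N lam p + layeredNorm N lam q := by
  obtain ⟨C, hC, hCb⟩ := guiv_exists_bound N hN_add hN_smul hN_zero
  have hNnonneg : ∀ u, 0 ≤ N u := by
    intro u
    have h := hN_add u (-u)
    have h0 : N 0 = 0 := by simpa using hN_smul 0 0
    have hneg : N (-u) = N u := by simpa using hN_smul (-1) u
    rw [add_neg_cancel, h0, hneg] at h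
    linarith
  have hcoord : ∀ (u : (Fin n → ℝ) × (Fin n → ℝ)) (i : Fin n),
      |u.1 i| ≤ C * N u ∧ |u.2 i| ≤ C * N u := by
    intro u i
    have h1 : ‖u.1 i‖ ≤ ‖u.1‖ := norm_le_pi_norm u.1 i
    have h2 : ‖u.2 i‖ ≤ ‖u.2‖ := norm_le_pi_norm u.2 i
    have hb := hCb u
    exact ⟨by simpa using h1.trans ((norm_fst_le u).trans hb),
      by simpa using h2.trans ((norm_snd_le u).trans hb)⟩
  have hdot : ∀ (u v : (Fin n → ℝ) × (Fin n → ℝ)),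
      |dotR u.1 v.2| ≤ n * C ^ 2 * N u * N v := by
    intro u v
    have h0 : |dotR u.1 v.2| ≤ ∑ i : Fin n, |u.1 i * v.2 i| :=
      Finset.abs_sum_le_sum_abs _ _
    refine h0.trans ?_
    have hstep : ∀ i ∈ Finset.univ, |u.1 i * v.2 i| ≤ (C * N u) * (C * N v) := by
      intro i _
      rw [abs_mul]
      exact mul_le_mul (hcoord u i).1 (hcoord v i).2 (abs_nonneg _)
        (mul_nonneg hC.le (hNnonneg u))
    calc ∑ i : Fin n, |u.1 i * v.2 i| ≤ ∑ _i : Fin n, (C * N u) * (C * N v) :=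
          Finset.sum_le_sum hstep
      _ = n * C ^ 2 * N u * N v := by
          rw [Finset.sum_const, Finset.card_univ, Fintype.card_fin]
          ring
  set K : ℝ := n * C ^ 2 + 1 with hK
  have hnC2 : (0:ℝ) ≤ (n:ℝ) * C ^ 2 := by positivity
  have hK1 : (1:ℝ) ≤ K := by rw [hK]; linarith
  have hKpos : (0:ℝ) < K := by linarith
  have hsK : (0:ℝ) < Real.sqrt K := Real.sqrt_pos.2 hKpos
  have hsK1 : (1:ℝ) ≤ Real.sqrt K := by
    rw [show (1:ℝ) = Real.sqrt 1 by simp]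
    exact Real.sqrt_le_sqrt hK1
  refine ⟨1 / (2 * Real.sqrt K), by positivity, ?_, ?_⟩
  · rw [div_lt_one (by positivity)]
    linarith
  intro lam hlam hlamle p q
  have hlamK : lam ^ 2 * K ≤ 2 := by
    have h1 : lam * (2 * Real.sqrt K) ≤ 1 := by
      rw [← le_div_iff₀ (by positivity)]
      exact hlamle
    have h2 : lam * Real.sqrt K ≤ 1 := by nlinarith
    have h3 : (lam * Real.sqrt K) ^ 2 ≤ 1 := by
      nlinarith [mul_nonneg hlam.le hsK.le]
    have h4 : Real.sqrt K ^ 2 = K := Real.sq_sqrt hKpos.le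
    nlinarith
  obtain ⟨x, y, z⟩ := p
  obtain ⟨x', y', z'⟩ := q
  set a := layeredNorm N lam (x, y, z) with ha
  set b := layeredNorm N lam (x', y', z') with hb
  have hap : N (x, y) ≤ a := le_max_left _ _
  have haz : lam * Real.sqrt |z| ≤ a := le_max_right _ _
  have hbp : N (x', y') ≤ b := le_max_left _ _
  have hbz : lam * Real.sqrt |z'| ≤ b := le_max_right _ _
  have ha0 : 0 ≤ a := le_trans (hNnonneg _) hap
  have hb0 : 0 ≤ b := le_trans (hNnonneg _) hbp
  have hz_p : lam ^ 2 * |z| ≤ a ^ 2 := by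
    have h := Real.sq_sqrt (abs_nonneg z)
    have hsq := mul_self_le_mul_self (mul_nonneg hlam.le (Real.sqrt_nonneg |z|)) haz
    nlinarith
  have hz_q : lam ^ 2 * |z'| ≤ b ^ 2 := by
    have h := Real.sq_sqrt (abs_nonneg z')
    have hsq := mul_self_le_mul_self (mul_nonneg hlam.le (Real.sqrt_nonneg |z'|)) hbz
    nlinarith
  rw [layeredNorm]
  apply max_le
  · have h2 : ((Hmul (x,y,z) (x',y',z')).1, (Hmul (x,y,z) (x',y',z')).2.1)
        = (x, y) + (x', y') := rfl
    rw [h2]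
    exact (hN_add _ _).trans (add_le_add hap hbp)
  · set d1 := dotR x y' with hd1def
    set d2 := dotR x' y with hd2def
    have hZ : (Hmul (x,y,z) (x',y',z')).2.2 = z + z' + (1/2) * (d1 - d2) := rfl
    have hd1 : |d1| ≤ n * C ^ 2 * a * b := by
      have h := hdot (x, y) (x', y')
      refine h.trans ?_
      gcongr
      exact hNnonneg _
    have hd2 : |d2| ≤ n * C ^ 2 * a * b := by
      have h := hdot (x', y') (x, y)
      refine le_trans h ?_
      calc (n:ℝ) * C ^ 2 * N (x', y') * N (x, y)
          ≤ n * C ^ 2 * b * a := by gcongr; exact hNnonneg _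
        _ = n * C ^ 2 * a * b := by ring
    have habs : |(Hmul (x,y,z) (x',y',z')).2.2| ≤ |z| + |z'| + n * C ^ 2 * a * b := by
      rw [hZ]
      have e1 := abs_add_le (z + z') ((1/2) * (d1 - d2))
      have e2 := abs_add_le z z'
      have e3 : |(1/2 : ℝ) * (d1 - d2)| = (1/2) * |d1 - d2| := by
        rw [abs_mul]; norm_num
      have e4 : |d1 - d2| ≤ |d1| + |d2| := abs_sub d1 d2
      linarith
    have hM : lam ^ 2 * (n * C ^ 2 * a * b) ≤ 2 * (a * b) := by
      have hKab : lam ^ 2 * (n * C ^ 2) ≤ 2 := by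
        have h5 : lam ^ 2 * (n * C ^ 2) ≤ lam ^ 2 * K := by
          have : (n:ℝ) * C ^ 2 ≤ K := by rw [hK]; linarith
          exact mul_le_mul_of_nonneg_left this (sq_nonneg lam)
        linarith
      have h6 := mul_le_mul_of_nonneg_right hKab (mul_nonneg ha0 hb0)
      have h7 : lam ^ 2 * (n * C ^ 2 * a * b) = lam ^ 2 * (n * C ^ 2) * (a * b) := by ring
      linarith
    have hfin : lam ^ 2 * |(Hmul (x,y,z) (x',y',z')).2.2| ≤ (a + b) ^ 2 := by
      have h1 := mul_le_mul_of_nonneg_left habs (sq_nonneg lam)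
      have h8 : lam ^ 2 * (|z| + |z'| + n * C ^ 2 * a * b)
          = lam ^ 2 * |z| + lam ^ 2 * |z'| + lam ^ 2 * (n * C ^ 2 * a * b) := by ring
      have h9 : (a + b) ^ 2 = a ^ 2 + b ^ 2 + 2 * (a * b) := by ring
      linarith
    calc lam * Real.sqrt |(Hmul (x,y,z) (x',y',z')).2.2|
        = Real.sqrt (lam ^ 2 * |(Hmul (x,y,z) (x',y',z')).2.2|) := by
          rw [Real.sqrt_mul (by positivity), Real.sqrt_sq hlam.le]
      _ ≤ Real.sqrt ((a + b) ^ 2) := Real.sqrt_le_sqrt hfin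
      _ = a + b := Real.sqrt_sq (by linarith)
end
end

section
/- Blow-ups at interior ceiling and floor points of the Heisenberg unit sphere: let N be a norm on ℝⁿ × ℝⁿ, λ > 0, σ ∈ {1, −1}, and let p = (a, b, σ/λ²) with N(a,b) < 1 (so ‖p‖ = 1). Then for every q = (x,y,z) ∈ H_{2n+1}(ℝ), the one-sided limit lim_{t→0⁺} (‖p·δ_t q‖ − 1)/t exists and equals σ·(λ²/4)·(a⋅y − b⋅x). -/
open Filter Metric Real

noncomputable section

/-- Heisenberg dilations `δ_t(x,y,z) = (tx, ty, t²z)`. -/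
def Hdil {n : ℕ} (t : ℝ) (p : Heis n) : Heis n :=
  (t • p.1, t • p.2.1, t ^ 2 * p.2.2)

/-!
Near `t = 0` the vertical coordinate of `p·δ_t q` stays close to `σ/λ²`, so its layer
`λ√|·|` stays close to `1`, while by the triangle inequality the horizontal layer is at most
`N(a,b) + t N(x,y)`, close to `N(a,b) < 1`. Hence for small `t > 0` the quasi-norm is the
vertical layer alone, a smooth function of `t` whose derivative at `0` follows from the chain
rule: the vertical coordinate moves with speed `(a⋅y − b⋅x)/2`, and `|·|` has slope `σ` at `σ/λ²`.
-/

theorem dotR_eq_dotProduct {n : ℕ} (x y : Fin n → ℝ) : dotR x y = x ⬝ᵥ y := rfl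

theorem Hmul_Hdil_horizontal {n : ℕ} (p q : Heis n) (t : ℝ) :
    ((Hmul p (Hdil t q)).1, (Hmul p (Hdil t q)).2.1) = (p.1, p.2.1) + t • (q.1, q.2.1) := rfl

theorem Hmul_Hdil_vertical {n : ℕ} (p q : Heis n) (t : ℝ) :
    (Hmul p (Hdil t q)).2.2 =
      p.2.2 + t * (dotR p.1 q.2.1 - dotR p.2.1 q.1) / 2 + t ^ 2 * q.2.2 := by
  simp only [Hmul, Hdil, dotR_eq_dotProduct, dotProduct_smul, smul_dotProduct, smul_eq_mul,
    dotProduct_comm q.1]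
  ring

theorem layeredNorm_Hmul_Hdil {n : ℕ} (N : (Fin n → ℝ) × (Fin n → ℝ) → ℝ) (lam : ℝ)
    (p q : Heis n) (t : ℝ) :
    layeredNorm N lam (Hmul p (Hdil t q)) =
      max (N ((p.1, p.2.1) + t • (q.1, q.2.1)))
        (lam * √|p.2.2 + t * (dotR p.1 q.2.1 - dotR p.2.1 q.1) / 2 + t ^ 2 * q.2.2|) := by
  rw [layeredNorm, Hmul_Hdil_horizontal, Hmul_Hdil_vertical]

theorem le_add_mul_of_subadditive_of_homogeneous {E : Type*} [AddCommGroup E] [Module ℝ E]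
    {N : E → ℝ} (hN_add : ∀ u v, N (u + v) ≤ N u + N v)
    (hN_smul : ∀ (c : ℝ) u, N (c • u) = |c| * N u) (u v : E) {t : ℝ} (ht : 0 ≤ t) :
    N (u + t • v) ≤ N u + t * N v := by
  simpa only [hN_smul, abs_of_nonneg ht] using hN_add u (t • v)

theorem mul_sqrt_abs_div_sq {lam σ : ℝ} (hlam : 0 < lam) (hσ : |σ| = 1) :
    lam * √|σ / lam ^ 2| = 1 := by
  rw [abs_div, hσ, abs_of_pos (pow_pos hlam 2), sqrt_div' _ (by positivity), sqrt_one,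
    sqrt_sq hlam.le, mul_one_div_cancel hlam.ne']

theorem hasDerivAt_mul_sqrt_abs_quadratic {lam σ : ℝ} (hlam : 0 < lam) (hσ : σ = 1 ∨ σ = -1)
    (c z : ℝ) :
    HasDerivAt (fun t => lam * √|σ / lam ^ 2 + t * c / 2 + t ^ 2 * z|)
      (σ * (lam ^ 2 / 4) * c) 0 := by
  set w : ℝ → ℝ := fun t => σ / lam ^ 2 + t * c / 2 + t ^ 2 * z
  have hw0 : w 0 = σ / lam ^ 2 := by simp [w]
  have hw : HasDerivAt w (c / 2) 0 := by
    simpa using (((hasDerivAt_mul_const c).div_const 2).const_add (σ / lam ^ 2)).fun_add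
      ((hasDerivAt_pow 2 (0 : ℝ)).mul_const z)
  have hw0_ne : w 0 ≠ 0 := by rw [hw0]; rcases hσ with rfl | rfl <;> positivity
  have hsign : (SignType.sign (w 0) : ℝ) = σ := by
    rw [hw0]
    rcases hσ with rfl | rfl
    · rw [sign_pos (by positivity)]; simp
    · rw [sign_neg (div_neg_of_neg_of_pos (by norm_num) (by positivity))]; simp
  have hsqrt : lam * √|w 0| = 1 := by
    rw [hw0, mul_sqrt_abs_div_sq hlam ((abs_eq zero_le_one).2 hσ)]
  have := (((hasDerivAt_abs hw0_ne).comp 0 hw).sqrt (by simpa using hw0_ne)).const_mul lam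
  refine this.congr_deriv ?_
  simp only [Function.comp_apply, hsign]
  field_simp
  linear_combination -4 * σ * c * hsqrt

theorem tendsto_slope_max_of_eventually_le {f g : ℝ → ℝ} {g' : ℝ} (hg : HasDerivAt g g' 0)
    (hg0 : g 0 = 1) (hfg : ∀ᶠ t in nhdsWithin 0 (Set.Ioi 0), f t ≤ g t) :
    Tendsto (fun t => (max (f t) (g t) - 1) / t) (nhdsWithin 0 (Set.Ioi 0)) (nhds g') := by
  refine hg.tendsto_slope_zero_right.congr' ?_
  filter_upwards [hfg] with t ht
  rw [max_eq_right ht, zero_add, hg0, smul_eq_mul, div_eq_inv_mul]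

theorem blowup_ceiling_floor_general (n : ℕ) (N : (Fin n → ℝ) × (Fin n → ℝ) → ℝ)
    (hN_add : ∀ u v, N (u + v) ≤ N u + N v)
    (hN_smul : ∀ (c : ℝ) u, N (c • u) = |c| * N u)
    (lam : ℝ) (hlam : 0 < lam) (σ : ℝ) (hσ : σ = 1 ∨ σ = -1)
    (a b : Fin n → ℝ) (hab : N (a, b) < 1)
    (x y : Fin n → ℝ) (z : ℝ) :
    Tendsto
      (fun t : ℝ =>
        (layeredNorm N lam (Hmul (a, b, σ / lam ^ 2) (Hdil t (x, y, z))) - 1) / t)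
      (nhdsWithin 0 (Set.Ioi 0))
      (nhds (σ * (lam ^ 2 / 4) * (dotR a y - dotR b x))) := by
  set g : ℝ → ℝ := fun t => lam * √|σ / lam ^ 2 + t * (dotR a y - dotR b x) / 2 + t ^ 2 * z|
  have hg : HasDerivAt g (σ * (lam ^ 2 / 4) * (dotR a y - dotR b x)) 0 :=
    hasDerivAt_mul_sqrt_abs_quadratic hlam hσ _ _
  have hg0 : g 0 = 1 := by
    simpa [g] using mul_sqrt_abs_div_sq hlam ((abs_eq zero_le_one).2 hσ)
  have hline : Tendsto (fun t : ℝ => N (a, b) + t * N (x, y)) (nhds 0) (nhds (N (a, b))) :=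
    (by fun_prop : Continuous fun t : ℝ => N (a, b) + t * N (x, y)).tendsto' 0 _ (by simp)
  have hlt : ∀ᶠ t in nhds 0, N (a, b) + t * N (x, y) < g t :=
    hline.eventually_lt (hg0 ▸ hg.continuousAt.tendsto) hab
  have hle : ∀ᶠ t in nhdsWithin 0 (Set.Ioi 0), N ((a, b) + t • (x, y)) ≤ g t := by
    filter_upwards [self_mem_nhdsWithin, nhdsWithin_le_nhds hlt] with t (ht : 0 < t) ht_lt
    exact (le_add_mul_of_subadditive_of_homogeneous hN_add hN_smul _ _ ht.le).trans ht_lt.le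
  simpa only [layeredNorm_Hmul_Hdil] using tendsto_slope_max_of_eventually_le hg hg0 hle

/-- **Blow-ups at interior ceiling and floor points.** At `p = (a, b, σ/λ²)` with
`N(a,b) < 1`, the one-sided limit of `(‖p·δ_t q‖ − 1)/t` as `t → 0⁺` exists and equals
`σ·(λ²/4)·(a⋅y − b⋅x)`. -/
theorem blowup_ceiling_floor (n : ℕ) (N : (Fin n → ℝ) × (Fin n → ℝ) → ℝ)
    (hN_add : ∀ u v, N (u + v) ≤ N u + N v)
    (hN_smul : ∀ (c : ℝ) u, N (c • u) = |c| * N u)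
    (hN_zero : ∀ u, N u = 0 ↔ u = 0)
    (lam : ℝ) (hlam : 0 < lam) (σ : ℝ) (hσ : σ = 1 ∨ σ = -1)
    (a b : Fin n → ℝ) (hab : N (a, b) < 1)
    (x y : Fin n → ℝ) (z : ℝ) :
    Tendsto
      (fun t : ℝ =>
        (layeredNorm N lam (Hmul (a, b, σ / lam ^ 2) (Hdil t (x, y, z))) - 1) / t)
      (nhdsWithin 0 (Set.Ioi 0))
      (nhds (σ * (lam ^ 2 / 4) * (dotR a y - dotR b x))) :=
  blowup_ceiling_floor_general n N hN_add hN_smul lam hlam σ hσ a b hab x y z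
end
end

section
/- At interior wall points the layered sup quasi-norm locally agrees with the first-layer norm along dilation curves: let N be a norm on ℝⁿ × ℝⁿ, λ > 0, and let p = (a, b, c) with N(a,b) = 1 and λ√|c| < 1. Then for every q = (x,y,z) ∈ H_{2n+1}(ℝ) there exists t₀ > 0 such that for all t ∈ (0, t₀) one has ‖p·δ_t q‖ = N(a + t x, b + t y). -/
open Filter Metric Real

noncomputable section

/-- **Interior wall points.** At `p = (a,b,c)` with `N(a,b) = 1` and `λ√|c| < 1`, the
layered sup quasi-norm agrees with the first-layer norm along dilation curves for small
`t`. -/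
theorem wall_local_agreement (n : ℕ) (N : (Fin n → ℝ) × (Fin n → ℝ) → ℝ)
    (hN_add : ∀ u v, N (u + v) ≤ N u + N v)
    (hN_smul : ∀ (c : ℝ) u, N (c • u) = |c| * N u)
    (hN_zero : ∀ u, N u = 0 ↔ u = 0)
    (lam : ℝ) (hlam : 0 < lam)
    (a b : Fin n → ℝ) (c : ℝ) (hab : N (a, b) = 1) (hc : lam * Real.sqrt |c| < 1)
    (x y : Fin n → ℝ) (z : ℝ) :
    ∃ t₀ : ℝ, 0 < t₀ ∧ ∀ t : ℝ, 0 < t → t < t₀ →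
      layeredNorm N lam (Hmul (a, b, c) (Hdil t (x, y, z))) = N (a + t • x, b + t • y) := by
  set w : ℝ := dotR a y - dotR x b with hw
  set F : ℝ → ℝ := fun t => lam * Real.sqrt |c + t ^ 2 * z + 1 / 2 * (t * w)| + t * N (x, y)
    with hF
  have hFcont : ContinuousAt F 0 := by
    have h1 : ContinuousAt (fun t : ℝ => c + t ^ 2 * z + 1 / 2 * (t * w)) 0 := by fun_prop
    exact ((continuousAt_const.mul (h1.abs.sqrt))).add (continuousAt_id.mul continuousAt_const)
  have hF0 : F 0 = lam * Real.sqrt |c| := by simp [hF]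
  have hev : ∀ᶠ t in nhds (0 : ℝ), F t < 1 := by
    have := hFcont.eventually_lt continuousAt_const (by rw [hF0]; exact hc)
    exact this
  rw [Metric.eventually_nhds_iff] at hev
  obtain ⟨δ, hδ, hball⟩ := hev
  refine ⟨δ, hδ, fun t ht htδ => ?_⟩
  have hFt : F t < 1 := hball (by rw [Real.dist_eq, sub_zero, abs_of_pos ht]; exact htδ)
  -- first layer lower bound
  have hNxy_nonneg : 0 ≤ N (x, y) := by
    have h1 := hN_add (x, y) (-(x, y))
    have h2 : N (-(x, y)) = N (x, y) := by
      have := hN_smul (-1) (x, y); simpa using this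
    have h0 : N (0 : (Fin n → ℝ) × (Fin n → ℝ)) = 0 := (hN_zero 0).mpr rfl
    simp only [add_neg_cancel, h0, h2] at h1
    linarith
  have hlower : 1 - t * N (x, y) ≤ N (a + t • x, b + t • y) := by
    have h1 := hN_add ((a, b) + t • (x, y)) (-(t • (x, y)))
    have h2 : N (-(t • (x, y))) = |t| * N (x, y) := by
      have := hN_smul (-t) (x, y)
      simpa [neg_smul] using this
    have h3 : (a, b) + t • (x, y) + -(t • (x, y)) = ((a, b) : (Fin n → ℝ) × (Fin n → ℝ)) := by
      abel
    rw [h3, hab, h2, abs_of_pos ht] at h1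
    have h4 : ((a, b) : (Fin n → ℝ) × (Fin n → ℝ)) + t • (x, y) = (a + t • x, b + t • y) := by
      simp [Prod.ext_iff, Prod.smul_def]
    rw [h4] at h1
    linarith
  -- compute the product
  have hdot1 : dotR a (t • y) = t * dotR a y := by
    simp only [dotR, Pi.smul_apply, smul_eq_mul, Finset.mul_sum]
    exact Finset.sum_congr rfl fun i _ => by ring
  have hdot2 : dotR (t • x) b = t * dotR x b := by
    simp only [dotR, Pi.smul_apply, smul_eq_mul, Finset.mul_sum]
    exact Finset.sum_congr rfl fun i _ => by ring
  have hmul : Hmul (a, b, c) (Hdil t (x, y, z)) =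
      (a + t • x, b + t • y, c + t ^ 2 * z + 1 / 2 * (t * w)) := by
    simp only [Hmul, Hdil, hdot1, hdot2, hw]
    refine Prod.ext rfl (Prod.ext rfl ?_)
    ring
  rw [hmul]
  unfold layeredNorm
  simp only
  refine max_eq_left ?_
  have : lam * Real.sqrt |c + t ^ 2 * z + 1 / 2 * (t * w)| = F t - t * N (x, y) := by
    simp [hF]
  rw [this]
  linarith
end
end

section
/- Non-principal blow-up of the unit square along a shifted sequence of basepoints: fix c ∈ ℝ, let p_n = (1 + c/n, 0) and ε_n = 1/n, and set C_n = n·(Ω − p_n) ⊆ ℝ². Then for every q = (q₁,q₂) ∈ ℝ² with q₁ ≤ −c one has infDist(q, C_n) → 0 as n → ∞, and for every q with q₁ > −c one has infDist(q, C_n) ≥ q₁ + c for all n; consequently the Kuratowski limit of the sequence C_n is the closed half-plane {q : q₁ ≤ −c}. -/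
open Filter Metric

noncomputable section

/-- The closed unit square `Ω = [−1,1] × [−1,1]` in `ℝ²`. -/
def unitSquare : Set (ℝ × ℝ) := Set.Icc (-1) 1 ×ˢ Set.Icc (-1) 1

/-- The blow-up set `(1/ε)·(Ω − p)` of the unit square at basepoint `p` and scale `ε`. -/
def blowupSet (p : ℝ × ℝ) (ε : ℝ) : Set (ℝ × ℝ) :=
  (fun w => (1 / ε) • (w - p)) '' unitSquare

/-- The basepoints `p_n = (1 + c/n, 0)`. -/
def shiftedBase (c : ℝ) (n : ℕ) : ℝ × ℝ := (1 + c / (n : ℝ), 0)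

/-- The blow-up sets `C_n = n·(Ω − p_n)` along the shifted basepoints. -/
def shiftedBlowup (c : ℝ) (n : ℕ) : Set (ℝ × ℝ) :=
  (fun w => (n : ℝ) • (w - shiftedBase c n)) '' unitSquare

lemma mem_shiftedBlowup (c : ℝ) (n : ℕ) (hn : 1 ≤ n) {q : ℝ × ℝ}
    (h1 : -(2*(n:ℝ)) ≤ q.1 + c) (h2 : q.1 ≤ -c) (h3 : |q.2| ≤ (n:ℝ)) :
    q ∈ shiftedBlowup c n := by
  have hn0 : (0:ℝ) < n := by exact_mod_cast hn
  refine ⟨((q.1 + c)/n + 1, q.2/n), ?_, ?_⟩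
  · constructor
    · constructor
      · have : (-2:ℝ) ≤ (q.1 + c)/n := by
          rw [le_div_iff₀ hn0]; nlinarith
        linarith
      · have : (q.1 + c)/n ≤ 0 := div_nonpos_of_nonpos_of_nonneg (by linarith) hn0.le
        linarith
    · rw [Set.mem_Icc, abs_le] at *
      constructor
      · rw [le_div_iff₀ hn0]; nlinarith [h3.1]
      · rw [div_le_iff₀ hn0]; nlinarith [h3.2]
  · have hne : (n:ℝ) ≠ 0 := hn0.ne'
    simp only [shiftedBase, Prod.smul_mk, Prod.mk_sub_mk, smul_eq_mul]
    ext <;> simp <;> field_simp <;> ring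

lemma fst_le_of_mem (c : ℝ) (n : ℕ) (hn : 1 ≤ n) {w : ℝ × ℝ}
    (hw : w ∈ shiftedBlowup c n) : w.1 ≤ -c := by
  obtain ⟨x, hx, rfl⟩ := hw
  have hn0 : (0:ℝ) < n := by exact_mod_cast hn
  have hx1 : x.1 ≤ 1 := hx.1.2
  have : ((n:ℝ) • (x - shiftedBase c n)).1 = n * (x.1 - 1) - c := by
    simp [shiftedBase, Prod.smul_def, smul_eq_mul]
    field_simp
    ring
  rw [this]
  nlinarith

lemma nonempty_shiftedBlowup (c : ℝ) (n : ℕ) : (shiftedBlowup c n).Nonempty :=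
  ⟨_, ⟨(1,0), by constructor <;> constructor <;> norm_num, rfl⟩⟩

lemma bdd_above (c : ℝ) (n : ℕ) (hn : 1 ≤ n) (q : ℝ × ℝ) :
    infDist q (shiftedBlowup c n) ≤ dist q (-c, 0) := by
  have hn0 : (n:ℝ) ≠ 0 := by positivity
  have : ((-c : ℝ), (0:ℝ)) ∈ shiftedBlowup c n := by
    refine ⟨(1,0), by constructor <;> constructor <;> norm_num, ?_⟩
    simp [shiftedBase, Prod.smul_def, smul_eq_mul]
    field_simp
  exact infDist_le_dist_of_mem this

lemma le_infDist' {s : Set (ℝ × ℝ)} {q : ℝ × ℝ} {b : ℝ} (hs : s.Nonempty)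
    (h : ∀ w ∈ s, b ≤ dist q w) : b ≤ infDist q s := by
  by_contra hlt
  push_neg at hlt
  obtain ⟨w, hw, hd⟩ := (infDist_lt_iff hs).1 hlt
  exact absurd (h w hw) (by linarith)


/-- **Non-principal blow-up of the unit square along a shifted sequence of basepoints:**
with `p_n = (1 + c/n, 0)` and `ε_n = 1/n`, the sets `C_n = n·(Ω − p_n)` converge in the
sense of Kuratowski to the closed half-plane `{q : q₁ ≤ −c}`. -/
theorem blowup_square_shifted (c : ℝ) :
    (∀ q : ℝ × ℝ, q.1 ≤ -c →
      Tendsto (fun n => infDist q (shiftedBlowup c n)) atTop (nhds 0)) ∧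
    (∀ q : ℝ × ℝ, -c < q.1 → ∀ n : ℕ, 1 ≤ n → q.1 + c ≤ infDist q (shiftedBlowup c n)) ∧
    {q : ℝ × ℝ | Tendsto (fun n => infDist q (shiftedBlowup c n)) atTop (nhds 0)}
      = {q : ℝ × ℝ | q.1 ≤ -c} ∧
    {q : ℝ × ℝ | Filter.liminf (fun n => infDist q (shiftedBlowup c n)) atTop = 0}
      = {q : ℝ × ℝ | q.1 ≤ -c} := by
  have part1 : ∀ q : ℝ × ℝ, q.1 ≤ -c →
      Tendsto (fun n => infDist q (shiftedBlowup c n)) atTop (nhds 0) := by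
    intro q hq
    obtain ⟨N, hN⟩ := exists_nat_ge (max (|q.2|) (-(q.1 + c)/2))
    have hev : ∀ᶠ n in atTop, infDist q (shiftedBlowup c n) = 0 := by
      filter_upwards [eventually_ge_atTop (max 1 N)] with n hn
      have hn1 : 1 ≤ n := le_trans (le_max_left _ _) hn
      have hNn : (N:ℝ) ≤ n := by exact_mod_cast le_trans (le_max_right _ _) hn
      have hb1 : -(q.1 + c)/2 ≤ (n:ℝ) := le_trans (le_trans (le_max_right _ _) hN) hNn
      have hb2 : |q.2| ≤ (n:ℝ) := le_trans (le_trans (le_max_left _ _) hN) hNn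
      exact infDist_zero_of_mem (mem_shiftedBlowup c n hn1 (by linarith) hq hb2)
    exact Tendsto.congr' (hev.mono fun n h => h.symm) tendsto_const_nhds
  have part2 : ∀ q : ℝ × ℝ, -c < q.1 → ∀ n : ℕ, 1 ≤ n →
      q.1 + c ≤ infDist q (shiftedBlowup c n) := by
    intro q hq n hn
    refine le_infDist' (nonempty_shiftedBlowup c n) fun w hw => ?_
    have h1 : w.1 ≤ -c := fst_le_of_mem c n hn hw
    have h2 : dist q.1 w.1 ≤ dist q w := by rw [Prod.dist_eq]; exact le_max_left _ _
    have h3 : q.1 - w.1 ≤ dist q.1 w.1 := by rw [Real.dist_eq]; exact le_abs_self _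
    linarith
  refine ⟨part1, part2, ?_, ?_⟩
  · ext q
    simp only [Set.mem_setOf_eq]
    constructor
    · intro h
      by_contra hq
      push_neg at hq
      obtain ⟨n, h1, h2⟩ :=
        ((h.eventually_lt_const (show (0:ℝ) < q.1 + c by linarith)).and
          (eventually_ge_atTop 1)).exists
      linarith [part2 q hq n h2]
    · exact part1 q
  · ext q
    simp only [Set.mem_setOf_eq]
    constructor
    · intro h
      by_contra hq
      push_neg at hq
      have hcb : IsCoboundedUnder (· ≥ ·) atTop (fun n => infDist q (shiftedBlowup c n)) := by
        apply isCoboundedUnder_ge_of_eventually_le atTop (x := dist q (-c, 0))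
        filter_upwards [eventually_ge_atTop 1] with n hn
        exact bdd_above c n hn q
      have := le_liminf_of_le hcb (by
        filter_upwards [eventually_ge_atTop 1] with n hn
        exact part2 q hq n hn)
      rw [h] at this
      linarith
    · intro hq
      exact (part1 q hq).liminf_eq
end
end

section
/- A graduable Lie algebra that is not stratifiable: let 𝔤 be a Lie algebra over ℝ with basis e₁, e₂, e₃, e₄, e₅ whose only nonvanishing brackets among basis vectors (up to antisymmetry) are [e₁,e₂] = e₃, [e₁,e₃] = e₄, [e₁,e₄] = e₅, and [e₂,e₃] = e₅. Then 𝔤 admits no stratification: there is no finite family of linear subspaces V₁, …, Vₛ of 𝔤 with s ≥ 1, Vₛ ≠ {0}, 𝔤 = V₁ ⊕ ⋯ ⊕ Vₛ (internal direct sum), span{[v,w] : v ∈ V₁, w ∈ Vⱼ} = V_{j+1} for all 1 ≤ j ≤ s−1, and span{[v,w] : v ∈ V₁, w ∈ Vₛ} = {0}. -/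
/-!
In a stratification every `V j` with `j ≥ 2` consists of brackets, so `V 1` spans `𝔤` modulo
the derived algebra, which here lies in `span {e 2, e 3, e 4}`. Hence `V 1` contains some
`x ≡ e 0` and `y ≡ e 1` modulo that span, and for every such pair
`⁅x, ⁅x, ⁅x, y⁆⁆⁆ = e 4 = ⁅y, ⁅x, y⁆⁆`. The left side lies in `V 4` and the right side in `V 3`,
so `e 4 = 0`.
-/

def bracketSpan {𝔤 : Type*} [LieRing 𝔤] [LieAlgebra ℝ 𝔤] (A B : Submodule ℝ 𝔤) :
    Submodule ℝ 𝔤 :=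
  Submodule.span ℝ {x : 𝔤 | ∃ v ∈ A, ∃ w ∈ B, ⁅v, w⁆ = x}

theorem exists_mem_eq_of_sup_ker_eq_top {R M N : Type*} [Ring R] [AddCommGroup M] [Module R M]
    [AddCommGroup N] [Module R N] {U : Submodule R M} {f : M →ₗ[R] N}
    (h : U ⊔ LinearMap.ker f = ⊤) (z : M) : ∃ x ∈ U, f x = f z := by
  obtain ⟨x, hx, w, hw, rfl⟩ := Submodule.mem_sup.mp (h ▸ Submodule.mem_top : z ∈ U ⊔ _)
  exact ⟨x, hx, by simp [LinearMap.mem_ker.mp hw]⟩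

section Stratification

variable {𝔤 : Type*} [LieRing 𝔤] [LieAlgebra ℝ 𝔤] {V : ℕ → Submodule ℝ 𝔤}

theorem lie_mem_of_bracketSpan_eq {j : ℕ} (hV : bracketSpan (V 1) (V j) = V (j + 1))
    {x y : 𝔤} (hx : x ∈ V 1) (hy : y ∈ V j) : ⁅x, y⁆ ∈ V (j + 1) :=
  hV ▸ Submodule.subset_span ⟨x, hx, y, hy, rfl⟩

theorem sup_eq_top_of_forall_lie_mem (hV0 : V 0 = ⊥) (hV : DirectSum.IsInternal V)
    (hbr : ∀ j, 1 ≤ j → bracketSpan (V 1) (V j) = V (j + 1))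
    {W : Submodule ℝ 𝔤} (hW : ∀ x y : 𝔤, ⁅x, y⁆ ∈ W) : V 1 ⊔ W = ⊤ := by
  refine eq_top_iff.mpr (hV.submodule_iSup_eq_top ▸ iSup_le fun j => ?_)
  match j with
  | 0 => simp [hV0]
  | 1 => exact le_sup_left
  | k + 2 =>
    rw [← hbr (k + 1) (by omega)]
    exact le_sup_of_le_right (Submodule.span_le.mpr fun _ ⟨x, _, y, _, hxy⟩ => hxy ▸ hW x y)

theorem lie_lie_eq_zero_of_lie_lie_lie_eq (hV : DirectSum.IsInternal V)
    (hbr : ∀ j, 1 ≤ j → bracketSpan (V 1) (V j) = V (j + 1)) {x y : 𝔤}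
    (hx : x ∈ V 1) (hy : y ∈ V 1) (h : ⁅x, ⁅x, ⁅x, y⁆⁆⁆ = ⁅y, ⁅x, y⁆⁆) : ⁅y, ⁅x, y⁆⁆ = 0 := by
  have h2 : ⁅x, y⁆ ∈ V 2 := lie_mem_of_bracketSpan_eq (hbr 1 le_rfl) hx hy
  have h3 : ⁅y, ⁅x, y⁆⁆ ∈ V 3 := lie_mem_of_bracketSpan_eq (hbr 2 (by omega)) hy h2
  have h4 : ⁅x, ⁅x, ⁅x, y⁆⁆⁆ ∈ V 4 := lie_mem_of_bracketSpan_eq (hbr 3 (by omega)) hx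
    (lie_mem_of_bracketSpan_eq (hbr 2 (by omega)) hx h2)
  have hdisj : Disjoint (V 3) (V 4) := hV.submodule_iSupIndep.pairwiseDisjoint (by decide)
  exact Submodule.disjoint_def.mp hdisj _ h3 (h ▸ h4)

end Stratification

structure HasDim5Brackets {𝔤 : Type*} [LieRing 𝔤] [LieAlgebra ℝ 𝔤]
    (e : Module.Basis (Fin 5) ℝ 𝔤) : Prop where
  lie01 : ⁅e 0, e 1⁆ = e 2
  lie02 : ⁅e 0, e 2⁆ = e 3
  lie03 : ⁅e 0, e 3⁆ = e 4
  lie12 : ⁅e 1, e 2⁆ = e 4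
  lie04 : ⁅e 0, e 4⁆ = 0
  lie13 : ⁅e 1, e 3⁆ = 0
  lie14 : ⁅e 1, e 4⁆ = 0
  lie23 : ⁅e 2, e 3⁆ = 0
  lie24 : ⁅e 2, e 4⁆ = 0
  lie34 : ⁅e 3, e 4⁆ = 0

namespace HasDim5Brackets

variable {𝔤 : Type*} [LieRing 𝔤] [LieAlgebra ℝ 𝔤] {e : Module.Basis (Fin 5) ℝ 𝔤}

theorem lie_eq (he : HasDim5Brackets e) (x y : 𝔤) :
    ⁅x, y⁆ = (e.repr x 0 * e.repr y 1 - e.repr x 1 * e.repr y 0) • e 2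
      + (e.repr x 0 * e.repr y 2 - e.repr x 2 * e.repr y 0) • e 3
      + (e.repr x 0 * e.repr y 3 - e.repr x 3 * e.repr y 0
          + e.repr x 1 * e.repr y 2 - e.repr x 2 * e.repr y 1) • e 4 := by
  have skew {a b c : 𝔤} (h : ⁅a, b⁆ = c) : ⁅b, a⁆ = -c := by rw [← lie_skew, h]
  conv_lhs => rw [← e.sum_repr x, ← e.sum_repr y]
  simp only [Fin.sum_univ_five, add_lie, lie_add, smul_lie, lie_smul, lie_self, he.lie01, he.lie02,
    he.lie03, he.lie12, he.lie04, he.lie13, he.lie14, he.lie23, he.lie24, he.lie34,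
    skew he.lie01, skew he.lie02, skew he.lie03, skew he.lie12, skew he.lie04, skew he.lie13,
    skew he.lie14, skew he.lie23, skew he.lie24, skew he.lie34]
  module

theorem repr_lie_zero (he : HasDim5Brackets e) (x y : 𝔤) : e.repr ⁅x, y⁆ 0 = 0 := by
  simp [he.lie_eq]

theorem repr_lie_one (he : HasDim5Brackets e) (x y : 𝔤) : e.repr ⁅x, y⁆ 1 = 0 := by
  simp [he.lie_eq]

theorem lie_lie_eq (he : HasDim5Brackets e) {x y : 𝔤}
    (hx0 : e.repr x 0 = 1) (hx1 : e.repr x 1 = 0)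
    (hy0 : e.repr y 0 = 0) (hy1 : e.repr y 1 = 1) : ⁅y, ⁅x, y⁆⁆ = e 4 := by
  simp [he.lie_eq, hx0, hx1, hy0, hy1]

theorem lie_lie_lie_eq (he : HasDim5Brackets e) {x y : 𝔤}
    (hx0 : e.repr x 0 = 1) (hx1 : e.repr x 1 = 0)
    (hy0 : e.repr y 0 = 0) (hy1 : e.repr y 1 = 1) : ⁅x, ⁅x, ⁅x, y⁆⁆⁆ = e 4 := by
  simp [he.lie_eq, hx0, hx1, hy0, hy1]

end HasDim5Brackets

/-- **A graduable Lie algebra that is not stratifiable:** the 5-dimensional Lie algebra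
with basis `e₁, …, e₅` and nonvanishing brackets `[e₁,e₂] = e₃`, `[e₁,e₃] = e₄`,
`[e₁,e₄] = e₅`, `[e₂,e₃] = e₅` admits no stratification. -/
theorem not_stratifiable_dim5 (𝔤 : Type*) [LieRing 𝔤] [LieAlgebra ℝ 𝔤]
    (e : Module.Basis (Fin 5) ℝ 𝔤)
    (h12 : ⁅e 0, e 1⁆ = e 2) (h13 : ⁅e 0, e 2⁆ = e 3) (h14 : ⁅e 0, e 3⁆ = e 4)
    (h23 : ⁅e 1, e 2⁆ = e 4)
    (h15 : ⁅e 0, e 4⁆ = 0) (h24 : ⁅e 1, e 3⁆ = 0) (h25 : ⁅e 1, e 4⁆ = 0)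
    (h34 : ⁅e 2, e 3⁆ = 0) (h35 : ⁅e 2, e 4⁆ = 0) (h45 : ⁅e 3, e 4⁆ = 0) :
    ¬ ∃ (s : ℕ) (V : ℕ → Submodule ℝ 𝔤),
        1 ≤ s ∧
        V s ≠ ⊥ ∧
        V 0 = ⊥ ∧
        (∀ j, s < j → V j = ⊥) ∧
        DirectSum.IsInternal V ∧
        (∀ j, 1 ≤ j → bracketSpan (V 1) (V j) = V (j + 1)) := by
  rintro ⟨s, V, -, -, hV0, -, hV, hbr⟩
  have he : HasDim5Brackets e := ⟨h12, h13, h14, h23, h15, h24, h25, h34, h35, h45⟩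
  let f := (e.coord 0).prod (e.coord 1)
  have hsup : V 1 ⊔ LinearMap.ker f = ⊤ := sup_eq_top_of_forall_lie_mem hV0 hV hbr fun x y => by
    simp [f, he.repr_lie_zero, he.repr_lie_one]
  obtain ⟨x, hx, hfx⟩ := exists_mem_eq_of_sup_ker_eq_top hsup (e 0)
  obtain ⟨y, hy, hfy⟩ := exists_mem_eq_of_sup_ker_eq_top hsup (e 1)
  obtain ⟨hx0, hx1⟩ : e.repr x 0 = 1 ∧ e.repr x 1 = 0 := by
    simpa [f, Finsupp.single_apply] using hfx
  obtain ⟨hy0, hy1⟩ : e.repr y 0 = 0 ∧ e.repr y 1 = 1 := by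
    simpa [f, Finsupp.single_apply] using hfy
  have h := lie_lie_eq_zero_of_lie_lie_lie_eq hV hbr hx hy
    ((he.lie_lie_lie_eq hx0 hx1 hy0 hy1).trans (he.lie_lie_eq hx0 hx1 hy0 hy1).symm)
  exact e.ne_zero 4 (he.lie_lie_eq hx0 hx1 hy0 hy1 ▸ h)
end

section
/- A nilpotent Lie algebra that is not graduable: let 𝔤 be a Lie algebra over ℝ with basis X₁, …, X₇ whose only non-trivial bracket relations among basis vectors (up to antisymmetry) are [X₁,Xⱼ] = X_{j+1} for j = 2, …, 6, [X₂,X₃] = X₆, and [X₂,X₄] = [X₅,X₂] = [X₃,X₄] = X₇. Then 𝔤 is nilpotent but admits no grading: there is no family of linear subspaces (V_s)_{s>0} of 𝔤, indexed by positive reals with all but finitely many equal to {0}, such that 𝔤 is the internal direct sum of the V_s and span{[v,w] : v ∈ V_s, w ∈ V_r} ⊆ V_{s+r} for all s, r > 0. -/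
section Filtration

variable {R L M : Type*} [CommRing R] [LieRing L] [LieAlgebra R L] [AddCommGroup M] [Module R M]
  [LieRingModule L M] [LieModule R L M]

theorem LieModule.lowerCentralSeries_le_of_filtration (F : ℕ → Submodule R M) (h0 : F 0 = ⊤)
    (hF : ∀ k, ∀ (x : L), ∀ m ∈ F k, ⁅x, m⁆ ∈ F (k + 1)) (k : ℕ) :
    (lowerCentralSeries R L M k : Submodule R M) ≤ F k := by
  induction k with
  | zero => simp [h0]
  | succ k ih =>
    rw [lowerCentralSeries_succ, LieSubmodule.lieIdeal_oper_eq_linear_span', Submodule.span_le]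
    rintro _ ⟨x, -, m, hm, rfl⟩
    exact hF k x m (ih hm)

theorem LieModule.isNilpotent_of_filtration (F : ℕ → Submodule R M) (h0 : F 0 = ⊤) {n : ℕ}
    (hn : F n = ⊥) (hF : ∀ k, ∀ (x : L), ∀ m ∈ F k, ⁅x, m⁆ ∈ F (k + 1)) :
    IsNilpotent L M := by
  rw [isNilpotent_iff R]
  refine ⟨n, ?_⟩
  rw [← LieSubmodule.toSubmodule_eq_bot, eq_bot_iff, ← hn]
  exact lowerCentralSeries_le_of_filtration F h0 hF n

end Filtration

theorem LieRing.isNilpotent_of_basis_lie_mem_span_Ioi {R L : Type*} [CommRing R] [LieRing L]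
    [LieAlgebra R L] {n : ℕ} (e : Module.Basis (Fin n) R L)
    (he : ∀ i j, i < j → ⁅e i, e j⁆ ∈ Submodule.span R (e '' Set.Ioi j)) :
    LieRing.IsNilpotent L := by
  set F : ℕ → Submodule R L := fun k => Submodule.span R (e '' {i | k ≤ (i : ℕ)}) with hF
  have span_Ioi_le (k : ℕ) (i : Fin n) (hi : k ≤ (i : ℕ)) :
      Submodule.span R (e '' Set.Ioi i) ≤ F (k + 1) := by
    refine Submodule.span_mono (Set.image_mono fun j hj => ?_)
    simp only [Set.mem_Ioi, Set.mem_ofPred_eq, ← Fin.val_fin_lt] at hj ⊢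
    omega
  have lie_mem (k : ℕ) (i j : Fin n) (hj : k ≤ (j : ℕ)) : ⁅e i, e j⁆ ∈ F (k + 1) := by
    rcases lt_trichotomy i j with hij | rfl | hij
    · exact span_Ioi_le k j hj (he i j hij)
    · simp
    · rw [← lie_skew]
      exact neg_mem (span_Ioi_le k i (hj.trans (Fin.le_def.1 hij.le)) (he j i hij))
  refine LieModule.isNilpotent_of_filtration F (by simp [hF, e.span_eq]) (n := n) (by simp [hF]) ?_
  intro k x m hm
  induction hm using Submodule.span_induction with
  | mem _ hm =>
    obtain ⟨j, hj, rfl⟩ := hm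
    rw [← e.sum_repr x, sum_lie]
    exact Submodule.sum_mem _ fun i _ => by
      rw [smul_lie]
      exact Submodule.smul_mem _ _ (lie_mem k i j hj)
  | zero => simp
  | add _ _ _ _ h₁ h₂ => rw [lie_add]; exact add_mem h₁ h₂
  | smul _ _ _ h => rw [lie_smul]; exact Submodule.smul_mem _ _ h

namespace DirectSum.IsInternal

variable {L : Type*} [LieRing L] [LieAlgebra ℝ L] {V : ℝ → Submodule ℝ L}

noncomputable def gradingEnd (hV : IsInternal V) : Module.End ℝ L :=
  toModule ℝ ℝ L (fun s => s • (V s).subtype) ∘ₗ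
    (LinearEquiv.ofBijective (coeLinearMap V) hV).symm.toLinearMap

theorem gradingEnd_apply_of_mem (hV : IsInternal V) {s : ℝ} {v : L} (hv : v ∈ V s) :
    hV.gradingEnd v = s • v := by
  have : (LinearEquiv.ofBijective (coeLinearMap V) hV).symm v = lof ℝ ℝ (fun s => V s) s ⟨v, hv⟩ := by
    rw [LinearEquiv.symm_apply_eq, lof_eq_of]
    exact (coeLinearMap_of V s ⟨v, hv⟩).symm
  simp [gradingEnd, this, toModule_lof]

theorem gradingEnd_injective (hV : IsInternal V) (h0 : V 0 = ⊥) :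
    Function.Injective hV.gradingEnd := by
  have htop : ⨆ s ∈ ({0}ᶜ : Set ℝ), hV.gradingEnd.eigenspace s = ⊤ := by
    refine eq_top_iff.2 (hV.submodule_iSup_eq_top.ge.trans (iSup_le fun s => ?_))
    by_cases hs : s = 0
    · simp [hs, h0]
    · exact le_trans (fun v hv => Module.End.mem_eigenspace_iff.2 (hV.gradingEnd_apply_of_mem hv))
        (le_biSup _ hs)
  have := (Module.End.eigenspaces_iSupIndep hV.gradingEnd).disjoint_biSup
    (x := 0) (y := {0}ᶜ) (by simp)
  rw [htop, disjoint_top, Module.End.eigenspace_zero] at this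
  exact LinearMap.ker_eq_bot.1 this

theorem gradingEnd_lie (hV : IsInternal V)
    (hlie : ∀ s r, ∀ v ∈ V s, ∀ w ∈ V r, ⁅v, w⁆ ∈ V (s + r)) (x y : L) :
    hV.gradingEnd ⁅x, y⁆ = ⁅x, hV.gradingEnd y⁆ - ⁅y, hV.gradingEnd x⁆ := by
  have hmem (z : L) : z ∈ ⨆ s, V s := by simp [hV.submodule_iSup_eq_top]
  induction hmem x using Submodule.iSup_induction' with
  | zero => simp
  | add x₁ x₂ _ _ h₁ h₂ => simp only [add_lie, lie_add, map_add, h₁, h₂]; abel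
  | mem s v hv =>
  induction hmem y using Submodule.iSup_induction' with
  | zero => simp
  | add y₁ y₂ _ _ h₁ h₂ => simp only [add_lie, lie_add, map_add, h₁, h₂]; abel
  | mem r w hw =>
  rw [hV.gradingEnd_apply_of_mem (hlie s r v hv w hw), hV.gradingEnd_apply_of_mem hv,
    hV.gradingEnd_apply_of_mem hw, lie_smul, lie_smul, ← lie_skew w v]
  module

noncomputable def gradingDerivation (hV : IsInternal V)
    (hlie : ∀ s r, ∀ v ∈ V s, ∀ w ∈ V r, ⁅v, w⁆ ∈ V (s + r)) : LieDerivation ℝ L L where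
  __ := hV.gradingEnd
  leibniz' := hV.gradingEnd_lie hlie

end DirectSum.IsInternal

section Dim7

variable {R L : Type*} [CommRing R] [LieRing L] [LieAlgebra R L]

structure Dim7Brackets (e : Module.Basis (Fin 7) R L) : Prop where
  lie01 : ⁅e 0, e 1⁆ = e 2
  lie02 : ⁅e 0, e 2⁆ = e 3
  lie03 : ⁅e 0, e 3⁆ = e 4
  lie04 : ⁅e 0, e 4⁆ = e 5
  lie05 : ⁅e 0, e 5⁆ = e 6
  lie06 : ⁅e 0, e 6⁆ = 0
  lie12 : ⁅e 1, e 2⁆ = e 5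
  lie13 : ⁅e 1, e 3⁆ = e 6
  lie14 : ⁅e 1, e 4⁆ = -e 6
  lie15 : ⁅e 1, e 5⁆ = 0
  lie16 : ⁅e 1, e 6⁆ = 0
  lie23 : ⁅e 2, e 3⁆ = e 6
  lie24 : ⁅e 2, e 4⁆ = 0
  lie25 : ⁅e 2, e 5⁆ = 0
  lie26 : ⁅e 2, e 6⁆ = 0
  lie34 : ⁅e 3, e 4⁆ = 0
  lie35 : ⁅e 3, e 5⁆ = 0
  lie36 : ⁅e 3, e 6⁆ = 0
  lie45 : ⁅e 4, e 5⁆ = 0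
  lie46 : ⁅e 4, e 6⁆ = 0
  lie56 : ⁅e 5, e 6⁆ = 0

namespace Dim7Brackets

variable {e : Module.Basis (Fin 7) R L}

theorem lie_mem_span_Ioi (h : Dim7Brackets e) (i j : Fin 7) (hij : i < j) :
    ⁅e i, e j⁆ ∈ Submodule.span R (e '' Set.Ioi j) := by
  have mem (k : Fin 7) (hk : j < k) : e k ∈ Submodule.span R (e '' Set.Ioi j) :=
    Submodule.subset_span (Set.mem_image_of_mem e hk)
  obtain ⟨h01, h02, h03, h04, h05, h06, h12, h13, h14, h15, h16, h23, h24, h25, h26, h34, h35,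
    h36, h45, h46, h56⟩ := h
  fin_cases i <;> fin_cases j <;> simp only [Fin.reduceFinMk, Fin.isValue, Fin.reduceLT] at hij ⊢ <;>
    simp only [h01, h02, h03, h04, h05, h06, h12, h13, h14, h15, h16, h23, h24, h25, h26, h34, h35,
      h36, h45, h46, h56] <;>
    first | exact zero_mem _ | exact mem _ (by decide) | exact neg_mem (mem _ (by decide))

theorem derivation_apply_three (h : Dim7Brackets e) (D : LieDerivation R L L) {a b : Fin 7 → R}
    (ha : D (e 0) = ∑ i, a i • e i) (hb : D (e 1) = ∑ i, b i • e i) :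
    D (e 3) = (2 * a 0 + b 1) • e 3 + b 2 • e 4 + (a 1 + b 3) • e 5
      + (b 4 - a 2 - a 3) • e 6 := by
  obtain ⟨h01, h02, h03, h04, h05, h06, h12, h13, h14, h15, h16, h23, h24, h25, h26, -⟩ := h
  -- the order hypothesis only orients the rewriting, so that `simp` does not loop
  have swap (i j : Fin 7) (_ : j < i) : ⁅e i, e j⁆ = -⁅e j, e i⁆ := (lie_skew _ _).symm
  have hD2 : D (e 2) = (a 0 + b 1) • e 2 + b 2 • e 3 + b 3 • e 4 + (b 4 - a 2) • e 5
      + (b 5 - a 3 + a 4) • e 6 := by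
    rw [← h01, D.apply_lie_eq_add, ha, hb]
    simp only [Fin.sum_univ_seven, add_lie, lie_add, smul_lie, lie_smul, lie_self, swap,
      Fin.reduceLT, h01, h02, h03, h04, h05, h06, h12, h13, h14, h15, h16]
    module
  rw [← h02, D.apply_lie_eq_add, ha, hD2]
  simp only [Fin.sum_univ_seven, add_lie, lie_add, smul_lie, lie_smul, lie_self, swap,
    Fin.reduceLT, h02, h03, h04, h05, h06, h12, h23, h24, h25, h26]
  module

theorem derivation_apply_six_eq_zero (h : Dim7Brackets e) (D : LieDerivation R L L) :
    D (e 6) = 0 := by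
  obtain ⟨a, ha⟩ : ∃ a : Fin 7 → R, D (e 0) = ∑ i, a i • e i := ⟨_, (e.sum_repr _).symm⟩
  obtain ⟨b, hb⟩ : ∃ b : Fin 7 → R, D (e 1) = ∑ i, b i • e i := ⟨_, (e.sum_repr _).symm⟩
  have hD3 := h.derivation_apply_three D ha hb
  obtain ⟨-, -, h03, h04, h05, h06, -, h13, h14, h15, h16, h23, h24, h25, h26, h34, h35,
    h36, h45, h46, h56⟩ := h
  have swap (i j : Fin 7) (_ : j < i) : ⁅e i, e j⁆ = -⁅e j, e i⁆ := (lie_skew _ _).symm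
  have hD4 : D (e 4) = (3 * a 0 + b 1) • e 4 + b 2 • e 5 + (2 * a 1 + a 2 + b 3) • e 6 := by
    rw [← h03, D.apply_lie_eq_add, ha, hD3]
    simp only [Fin.sum_univ_seven, add_lie, lie_add, smul_lie, lie_smul, lie_self, swap,
      Fin.reduceLT, h03, h04, h05, h06, h13, h23, h34, h35, h36]
    module
  have hD5 : D (e 5) = (4 * a 0 + b 1) • e 5 + (b 2 - a 1) • e 6 := by
    rw [← h04, D.apply_lie_eq_add, ha, hD4]
    simp only [Fin.sum_univ_seven, add_lie, lie_add, smul_lie, lie_smul, lie_self, swap,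
      Fin.reduceLT, h04, h05, h06, h14, h24, h34, h45, h46]
    module
  have hD6 : D (e 6) = (5 * a 0 + b 1) • e 6 := by
    rw [← h05, D.apply_lie_eq_add, ha, hD5]
    simp only [Fin.sum_univ_seven, add_lie, lie_add, smul_lie, lie_smul, lie_self, swap,
      Fin.reduceLT, h05, h06, h15, h25, h35, h45, h56]
    module
  have hD6₁₃ : D (e 6) = (2 * a 0 + 2 * b 1) • e 6 + b 0 • e 4 := by
    rw [← h13, D.apply_lie_eq_add, hb, hD3]
    simp only [Fin.sum_univ_seven, add_lie, lie_add, smul_lie, lie_smul, lie_self, swap,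
      Fin.reduceLT, h03, h13, h14, h15, h16, h23, h34, h35, h36]
    module
  have hD6₁₄ : D (e 6) = (3 * a 0 + 2 * b 1) • e 6 - b 0 • e 5 := by
    rw [← neg_neg (D (e 6)), ← map_neg, ← h14, D.apply_lie_eq_add, hb, hD4]
    simp only [Fin.sum_univ_seven, add_lie, lie_add, smul_lie, lie_smul, lie_self, swap,
      Fin.reduceLT, h04, h14, h15, h16, h24, h34, h45, h46]
    module
  have c₁₃ : 5 * a 0 + b 1 = 2 * a 0 + 2 * b 1 := by
    simpa using congr_arg (e.repr · 6) (hD6.symm.trans hD6₁₃)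
  have c₁₄ : 5 * a 0 + b 1 = 3 * a 0 + 2 * b 1 := by
    simpa using congr_arg (e.repr · 6) (hD6.symm.trans hD6₁₄)
  rw [hD6, show 5 * a 0 + b 1 = 0 by linear_combination 7 * c₁₃ - 8 * c₁₄, zero_smul]

end Dim7Brackets

end Dim7

/-- **A nilpotent Lie algebra that is not graduable:** the 7-dimensional Lie algebra with
basis `X₁, …, X₇` (here `X i = e (i-1)`) whose only non-trivial brackets are
`[X₁,Xⱼ] = X_{j+1}` for `j = 2, …, 6`, `[X₂,X₃] = X₆`, and
`[X₂,X₄] = [X₅,X₂] = [X₃,X₄] = X₇` is nilpotent but admits no grading by positive reals. -/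
theorem nilpotent_not_graduable_dim7 (𝔤 : Type*) [LieRing 𝔤] [LieAlgebra ℝ 𝔤]
    (e : Module.Basis (Fin 7) ℝ 𝔤)
    (h12 : ⁅e 0, e 1⁆ = e 2) (h13 : ⁅e 0, e 2⁆ = e 3) (h14 : ⁅e 0, e 3⁆ = e 4)
    (h15 : ⁅e 0, e 4⁆ = e 5) (h16 : ⁅e 0, e 5⁆ = e 6)
    (h23 : ⁅e 1, e 2⁆ = e 5) (h24 : ⁅e 1, e 3⁆ = e 6)
    (h52 : ⁅e 4, e 1⁆ = e 6) (h34 : ⁅e 2, e 3⁆ = e 6)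
    (h17 : ⁅e 0, e 6⁆ = 0)
    (h26 : ⁅e 1, e 5⁆ = 0) (h27 : ⁅e 1, e 6⁆ = 0)
    (h35 : ⁅e 2, e 4⁆ = 0) (h36 : ⁅e 2, e 5⁆ = 0) (h37 : ⁅e 2, e 6⁆ = 0)
    (h45 : ⁅e 3, e 4⁆ = 0) (h46 : ⁅e 3, e 5⁆ = 0) (h47 : ⁅e 3, e 6⁆ = 0)
    (h56 : ⁅e 4, e 5⁆ = 0) (h57 : ⁅e 4, e 6⁆ = 0) (h67 : ⁅e 5, e 6⁆ = 0) :
    LieRing.IsNilpotent 𝔤 ∧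
    ¬ ∃ V : ℝ → Submodule ℝ 𝔤,
        (∀ s : ℝ, s ≤ 0 → V s = ⊥) ∧
        {s : ℝ | V s ≠ ⊥}.Finite ∧
        DirectSum.IsInternal V ∧
        (∀ s r : ℝ, 0 < s → 0 < r → bracketSpan (V s) (V r) ≤ V (s + r)) := by
  have he : Dim7Brackets e := ⟨h12, h13, h14, h15, h16, h17, h23, h24, by rw [← lie_skew, h52],
    h26, h27, h34, h35, h36, h37, h45, h46, h47, h56, h57, h67⟩
  refine ⟨LieRing.isNilpotent_of_basis_lie_mem_span_Ioi e he.lie_mem_span_Ioi, ?_⟩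
  rintro ⟨V, hneg, -, hV, hgr⟩
  have hlie : ∀ s r, ∀ v ∈ V s, ∀ w ∈ V r, ⁅v, w⁆ ∈ V (s + r) := by
    intro s r v hv w hw
    rcases le_or_gt s 0 with hs | hs
    · simp [(Submodule.mem_bot ℝ).1 (hneg s hs ▸ hv)]
    rcases le_or_gt r 0 with hr | hr
    · simp [(Submodule.mem_bot ℝ).1 (hneg r hr ▸ hw)]
    exact hgr s r hs hr (Submodule.subset_span ⟨v, hv, w, hw, rfl⟩)
  have hD := he.derivation_apply_six_eq_zero (hV.gradingDerivation hlie)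
  exact e.ne_zero 6 (hV.gradingEnd_injective (hneg 0 le_rfl) (hD.trans (map_zero _).symm))
end
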